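/- Let H be a Hilbert space, f ∈ H', p > 2, and let Φ(u) = ½‖u‖² − (1/p) G(u) − f(u) where G(u) ≥ 0 is p-homogeneous (G(λu) = λ^p G(u) for λ ≥ 0). If (u_n) is a sequence with Φ(u_n) → β and Φ'(u_n)u_n = o(‖u_n‖) + o(1), then (u_n) is bounded in H. -/

import Mathlib

/-!
Subtracting `1/p` times the derivative term `Φ'(u)u = ‖u‖² - G(u) - f(u)` from the energy
`Φ(u) = ½‖u‖² - G(u)/p - f(u)` cancels `G` and leaves `(1/2 - 1/p)‖u‖² - (1 - 1/p) f(u)`.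
Along the sequence the left side is bounded by `C(1 + ‖u_n‖)`, and since `p > 2` the quadratic
term on the right dominates, so `‖u_n‖` stays bounded.
-/

open Filter Topology

theorem exists_bound_of_mul_sq_le {c : ℝ} (hc : 0 < c) (b d : ℝ) :
    ∃ M, ∀ a : ℝ, c * a ^ 2 ≤ b * a + d → a ≤ M := by
  refine ⟨max 1 ((|b| + |d|) / c), fun a ha => ?_⟩
  rcases le_or_gt a 1 with ha1 | ha1
  · exact le_max_of_le_left ha1
  · have ha0 : 0 < a := one_pos.trans ha1
    have hlin : a * (a * c) ≤ a * (|b| + |d|) := by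
      nlinarith [le_abs_self b, le_abs_self d, abs_nonneg d]
    exact le_max_of_le_right <| (le_div_iff₀ hc).2 (le_of_mul_le_mul_left hlin ha0)

theorem half_sub_inv_mul_sq_norm_le {E : Type*} [SeminormedAddCommGroup E] [NormedSpace ℝ E]
    (f : E →L[ℝ] ℝ) {p : ℝ} (hp : 1 ≤ p) (g : ℝ) (x : E) :
    (1 / 2 - 1 / p) * ‖x‖ ^ 2 ≤ (1 / 2 * ‖x‖ ^ 2 - 1 / p * g - f x)
      + 1 / p * |‖x‖ ^ 2 - g - f x| + (1 - 1 / p) * ‖f‖ * ‖x‖ := by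
  have hp_inv : 1 / p ≤ 1 := by rw [div_le_one (by linarith)]; exact hp
  have hp_inv0 : 0 ≤ 1 / p := by positivity
  have hG_cancels : (1 / 2 * ‖x‖ ^ 2 - 1 / p * g - f x) - 1 / p * (‖x‖ ^ 2 - g - f x)
      = (1 / 2 - 1 / p) * ‖x‖ ^ 2 - (1 - 1 / p) * f x := by ring
  have hf : f x ≤ ‖f‖ * ‖x‖ := (le_abs_self _).trans (f.le_opNorm x)
  have hderiv : 1 / p * -(‖x‖ ^ 2 - g - f x) ≤ 1 / p * |‖x‖ ^ 2 - g - f x| :=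
    mul_le_mul_of_nonneg_left (neg_le_abs _) hp_inv0
  have hfp : (1 - 1 / p) * f x ≤ (1 - 1 / p) * (‖f‖ * ‖x‖) :=
    mul_le_mul_of_nonneg_left hf (by linarith)
  linarith

theorem stmt_16_general {H : Type*} [NormedAddCommGroup H] [InnerProductSpace ℝ H]
    (f : H →L[ℝ] ℝ) (p : ℝ) (hp : 2 < p)
    (G : H → ℝ)
    (β : ℝ) (u : ℕ → H)
    (hΦ : Tendsto (fun n => (1 / 2) * ‖u n‖ ^ 2 - (1 / p) * G (u n) - f (u n))
      atTop (𝓝 β))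
    (ε : ℕ → ℝ) (hε : Tendsto ε atTop (𝓝 0))
    (hderiv : ∀ n, |‖u n‖ ^ 2 - G (u n) - f (u n)| ≤ ε n * ‖u n‖ + ε n) :
    ∃ M : ℝ, ∀ n, ‖u n‖ ≤ M := by
  obtain ⟨B, hB⟩ := hΦ.bddAbove_range
  obtain ⟨E, hE⟩ := hε.bddAbove_range
  have hc : 0 < 1 / 2 - 1 / p := by
    have : 1 / p < 1 / 2 := one_div_lt_one_div_of_lt two_pos hp
    linarith
  obtain ⟨M, hM⟩ := exists_bound_of_mul_sq_le hc (1 / p * E + (1 - 1 / p) * ‖f‖) (B + 1 / p * E)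
  refine ⟨M, fun n => hM _ ?_⟩
  have hderiv_le : |‖u n‖ ^ 2 - G (u n) - f (u n)| ≤ E * ‖u n‖ + E := by
    have hεn : ε n ≤ E := hE ⟨n, rfl⟩
    exact (hderiv n).trans (by gcongr)
  calc (1 / 2 - 1 / p) * ‖u n‖ ^ 2
      ≤ (1 / 2 * ‖u n‖ ^ 2 - 1 / p * G (u n) - f (u n))
        + 1 / p * |‖u n‖ ^ 2 - G (u n) - f (u n)| + (1 - 1 / p) * ‖f‖ * ‖u n‖ :=
        half_sub_inv_mul_sq_norm_le f (by linarith) (G (u n)) (u n)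
    _ ≤ B + 1 / p * (E * ‖u n‖ + E) + (1 - 1 / p) * ‖f‖ * ‖u n‖ := by
        gcongr
        exact hB ⟨n, rfl⟩
    _ = (1 / p * E + (1 - 1 / p) * ‖f‖) * ‖u n‖ + (B + 1 / p * E) := by ring

theorem stmt_16 {H : Type*} [NormedAddCommGroup H] [InnerProductSpace ℝ H]
    (f : H →L[ℝ] ℝ) (p : ℝ) (hp : 2 < p)
    (G : H → ℝ) (hG0 : ∀ u, 0 ≤ G u)
    (hGhom : ∀ (l : ℝ) (u : H), 0 ≤ l → G (l • u) = l ^ p * G u)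
    (β : ℝ) (u : ℕ → H)
    (hΦ : Tendsto (fun n => (1 / 2) * ‖u n‖ ^ 2 - (1 / p) * G (u n) - f (u n))
      atTop (𝓝 β))
    (ε : ℕ → ℝ) (hε0 : ∀ n, 0 ≤ ε n) (hε : Tendsto ε atTop (𝓝 0))
    (hderiv : ∀ n, |‖u n‖ ^ 2 - G (u n) - f (u n)| ≤ ε n * ‖u n‖ + ε n) :
    ∃ M : ℝ, ∀ n, ‖u n‖ ≤ M :=
  stmt_16_general f p hp G β u hΦ ε hε hderiv
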